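/- Let μ > 0 and T > 0. Then there exists C > 0 such that for all δ ∈ (0, √μ], ∫_{Ω_δ} tanh((|k|² − μ)/(2T))² d³k ≤ C δ³. -/

import Mathlib

/-!
On `Ω_δ` we have `|‖k‖² - μ| = |‖k‖ - √μ| (‖k‖ + √μ) ≤ 3√μ δ`, so `|tanh x| ≤ |x|` bounds the
integrand by `9μδ²/(4T²)`. The annulus is the spherical shell between the radii `√μ ± δ`, of
volume `((√μ + δ)³ - (√μ - δ)³) |B₁| ≤ 8μδ |B₁|`.
-/

open MeasureTheory

/-- The annulus of thickness `δ` around the Fermi sphere `{|k| = √μ}` in `ℝ³`. -/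
def fermiAnnulus (μ δ : ℝ) : Set (EuclideanSpace ℝ (Fin 3)) :=
  {k | |‖k‖ - Real.sqrt μ| ≤ δ}

open Metric Module

namespace Real

lemma sinh_le_mul_cosh {x : ℝ} (hx : 0 ≤ x) : sinh x ≤ x * cosh x := by
  have hderiv (y : ℝ) : HasDerivAt (fun y => y * cosh y - sinh y) (y * sinh y) y :=
    (((hasDerivAt_id y).mul (hasDerivAt_cosh y)).sub (hasDerivAt_sinh y)).congr_deriv
      (by simp)
  have hmono : MonotoneOn (fun y => y * cosh y - sinh y) (Set.Ici 0) :=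
    monotoneOn_of_hasDerivWithinAt_nonneg (convex_Ici 0)
      (fun y _ => (hderiv y).continuousAt.continuousWithinAt)
      (fun y _ => (hderiv y).hasDerivWithinAt)
      (fun y hy => by
        rw [interior_Ici] at hy
        exact mul_nonneg (le_of_lt hy) (sinh_nonneg_iff.2 (le_of_lt hy)))
  simpa using hmono Set.self_mem_Ici hx hx

lemma tanh_nonneg {x : ℝ} (hx : 0 ≤ x) : 0 ≤ tanh x := by
  rw [tanh_eq_sinh_div_cosh]
  exact div_nonneg (sinh_nonneg_iff.2 hx) (cosh_pos x).le

lemma tanh_le_self {x : ℝ} (hx : 0 ≤ x) : tanh x ≤ x := by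
  rw [tanh_eq_sinh_div_cosh, div_le_iff₀ (cosh_pos x)]
  exact sinh_le_mul_cosh hx

lemma abs_tanh_le_abs (x : ℝ) : |tanh x| ≤ |x| := by
  have key {y : ℝ} (hy : 0 ≤ y) : |tanh y| ≤ |y| := by
    rw [abs_of_nonneg hy, abs_of_nonneg (tanh_nonneg hy)]
    exact tanh_le_self hy
  rcases le_total 0 x with hx | hx
  · exact key hx
  · simpa only [tanh_neg, abs_neg] using key (neg_nonneg.2 hx)

end Real

section Shell

variable {E : Type*} [NormedAddCommGroup E] [NormedSpace ℝ E] [MeasurableSpace E] [BorelSpace E]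
  [FiniteDimensional ℝ E] [Nontrivial E] (μ : Measure E) [μ.IsAddHaarMeasure]

lemma addHaar_real_closedBall_diff_ball (x : E) {r R : ℝ} (hr : 0 ≤ r) (hrR : r ≤ R) :
    μ.real (closedBall x R \ ball x r) =
      (R ^ finrank ℝ E - r ^ finrank ℝ E) * μ.real (ball 0 1) := by
  rw [measureReal_sdiff (ball_subset_closedBall.trans (closedBall_subset_closedBall hrR))
      measurableSet_ball measure_closedBall_lt_top.ne,
    ← Measure.addHaar_real_closedBall_eq_addHaar_real_ball,
    Measure.addHaar_real_closedBall μ x (hr.trans hrR), Measure.addHaar_real_closedBall μ x hr]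
  ring

end Shell

lemma abs_sq_sub_sq_le_of_abs_sub_le {r s δ : ℝ} (hr : 0 ≤ r) (hs : 0 ≤ s) (h : |r - s| ≤ δ) :
    |r ^ 2 - s ^ 2| ≤ δ * (2 * s + δ) := by
  have hsum : |r + s| ≤ 2 * s + δ := by
    rw [abs_of_nonneg (add_nonneg hr hs)]
    linarith [(abs_le.1 h).2]
  rw [sq_sub_sq, abs_mul, mul_comm]
  exact mul_le_mul h hsum (abs_nonneg _) ((abs_nonneg _).trans h)

lemma fermiAnnulus_eq_closedBall_diff_ball (μ δ : ℝ) :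
    fermiAnnulus μ δ = closedBall 0 (√μ + δ) \ ball 0 (√μ - δ) := by
  ext k
  simp only [fermiAnnulus, Set.mem_ofPred_eq, Set.mem_sdiff, mem_closedBall, mem_ball,
    dist_zero_right, not_lt, abs_le]
  constructor <;> rintro ⟨h₁, h₂⟩ <;> constructor <;> linarith

lemma volume_real_fermiAnnulus_le {μ δ : ℝ} (hμ : 0 ≤ μ) (hδ : 0 ≤ δ) (hδμ : δ ≤ √μ) :
    volume.real (fermiAnnulus μ δ) ≤
      8 * μ * δ * volume.real (ball (0 : EuclideanSpace ℝ (Fin 3)) 1) := by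
  rw [fermiAnnulus_eq_closedBall_diff_ball,
    addHaar_real_closedBall_diff_ball _ _ (sub_nonneg.2 hδμ) (by linarith),
    finrank_euclideanSpace_fin]
  have hδ2 : δ ^ 2 ≤ μ := by simpa [Real.sq_sqrt hμ] using pow_le_pow_left₀ hδ hδμ 2
  gcongr
  nlinarith [mul_le_mul_of_nonneg_left hδ2 hδ, Real.sq_sqrt hμ]

lemma tanh_sq_le_of_mem_fermiAnnulus {μ T δ : ℝ} (hμ : 0 ≤ μ) (hδμ : δ ≤ √μ)
    {k : EuclideanSpace ℝ (Fin 3)} (hk : k ∈ fermiAnnulus μ δ) :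
    Real.tanh ((‖k‖ ^ 2 - μ) / (2 * T)) ^ 2 ≤ 9 * μ * δ ^ 2 / (4 * T ^ 2) := by
  have hδ : 0 ≤ δ := (abs_nonneg _).trans hk
  have hsq : |‖k‖ ^ 2 - μ| ≤ 3 * √μ * δ := by
    have := abs_sq_sub_sq_le_of_abs_sub_le (norm_nonneg k) (Real.sqrt_nonneg μ) hk
    rw [Real.sq_sqrt hμ] at this
    nlinarith
  calc Real.tanh ((‖k‖ ^ 2 - μ) / (2 * T)) ^ 2 ≤ ((‖k‖ ^ 2 - μ) / (2 * T)) ^ 2 :=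
        sq_le_sq.2 (Real.abs_tanh_le_abs _)
    _ = |‖k‖ ^ 2 - μ| ^ 2 / (4 * T ^ 2) := by rw [sq_abs]; ring
    _ ≤ (3 * √μ * δ) ^ 2 / (4 * T ^ 2) := by gcongr
    _ = 9 * μ * δ ^ 2 / (4 * T ^ 2) := by rw [mul_pow, mul_pow, Real.sq_sqrt hμ]; ring

/-- The integral of `tanh((|k|² - μ)/(2T))²` over the annulus `Ω_δ` of thickness `δ` around
the Fermi sphere is bounded by `C δ³`. -/
theorem tanh_sq_integral_annulus_bound (μ T : ℝ) (hμ : 0 < μ) (hT : 0 < T) :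
    ∃ C > 0, ∀ δ : ℝ, δ ∈ Set.Ioc 0 (Real.sqrt μ) →
      (∫ k in fermiAnnulus μ δ, Real.tanh ((‖k‖ ^ 2 - μ) / (2 * T)) ^ 2) ≤ C * δ ^ 3 := by
  set B := volume.real (ball (0 : EuclideanSpace ℝ (Fin 3)) 1)
  have hB : 0 < B := ENNReal.toReal_pos (measure_ball_pos _ _ one_pos).ne' measure_ball_lt_top.ne
  refine ⟨9 * μ / (4 * T ^ 2) * (8 * μ * B), by positivity, fun δ ⟨hδ, hδμ⟩ => ?_⟩
  have hfin : volume (fermiAnnulus μ δ) < ⊤ := by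
    rw [fermiAnnulus_eq_closedBall_diff_ball]
    exact (measure_mono Set.sdiff_subset).trans_lt measure_closedBall_lt_top
  calc (∫ k in fermiAnnulus μ δ, Real.tanh ((‖k‖ ^ 2 - μ) / (2 * T)) ^ 2)
      ≤ 9 * μ * δ ^ 2 / (4 * T ^ 2) * volume.real (fermiAnnulus μ δ) :=
        (le_abs_self _).trans <| norm_setIntegral_le_of_norm_le_const hfin fun k hk =>
          (Real.norm_of_nonneg (sq_nonneg _)).trans_le
            (tanh_sq_le_of_mem_fermiAnnulus hμ.le hδμ hk)
    _ ≤ 9 * μ * δ ^ 2 / (4 * T ^ 2) * (8 * μ * δ * B) := by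
        gcongr
        exact volume_real_fermiAnnulus_le hμ.le hδ.le hδμ
    _ = 9 * μ / (4 * T ^ 2) * (8 * μ * B) * δ ^ 3 := by ring
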